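/- arXiv:1305.3499 — 5 statements merged into one kernel-verified Lean document; each statement's English description precedes it below -/
import Mathlib

section
/- The tensor φ = C(n-2,2)·(ω¹∧ω²)⊙(ω¹∧ω²) − ((n-3)/2)·Σ_{i=1,2} Σ_{a=3}^n (ωⁱ∧ωᵃ)⊙(ωⁱ∧ωᵃ) + Σ_{3≤a<b≤n} (ωᵃ∧ωᵇ)⊙(ωᵃ∧ωᵇ) on ℝⁿ (n ≥ 4, standard Euclidean metric, standard dual basis ωⁱ) satisfies all algebraic Weyl tensor symmetries: φ_{abcd} = −φ_{bacd} = −φ_{abdc}, φ_{abcd} = φ_{cdab}, φ_{a[bcd]} = 0, and all traces of φ with respect to the metric vanish. -/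
/-- Kronecker delta, as a real number. -/
def kdelta (i a : ℕ) : ℝ := if i = a then 1 else 0

/-- The component `(a,b,c,d)` of the `(4,0)`-tensor `(ωⁱ ∧ ωʲ) ⊙ (ωⁱ ∧ ωʲ)`, the symmetric
square of the 2-form `ωⁱ ∧ ωʲ` built from standard dual basis covectors. -/
def wedgeSq (i j a b c d : ℕ) : ℝ :=
  (kdelta i a * kdelta j b - kdelta i b * kdelta j a) *
  (kdelta i c * kdelta j d - kdelta i d * kdelta j c)

/-- The maximally degenerate Riemannian Weyl tensor on `ℝⁿ` (indices `0, …, n-1`):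
`φ = C(n-2,2)·(ω⁰∧ω¹)² − ((n-3)/2)·Σ_{i=0,1} Σ_{a=2}^{n-1} (ωⁱ∧ωᵃ)²
   + Σ_{2 ≤ a < b ≤ n-1} (ωᵃ∧ωᵇ)²`. -/
noncomputable def phiRiem (n a b c d : ℕ) : ℝ :=
  (Nat.choose (n - 2) 2 : ℝ) * wedgeSq 0 1 a b c d
    - ((n : ℝ) - 3) / 2 *
        (∑ i ∈ Finset.range 2, ∑ x ∈ Finset.Ico 2 n, wedgeSq i x a b c d)
    + ∑ x ∈ Finset.Ico 2 n, ∑ y ∈ Finset.Ico (x + 1) n, wedgeSq x y a b c d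

namespace WeylAux

lemma w_swap1 (i j a b c d : ℕ) : wedgeSq i j b a c d = -wedgeSq i j a b c d := by
  unfold wedgeSq; ring

lemma w_swap2 (i j a b c d : ℕ) : wedgeSq i j a b d c = -wedgeSq i j a b c d := by
  unfold wedgeSq; ring

lemma w_pair (i j a b c d : ℕ) : wedgeSq i j c d a b = wedgeSq i j a b c d := by
  unfold wedgeSq; ring

lemma w_bianchi (i j a b c d : ℕ) :
    wedgeSq i j a b c d + wedgeSq i j a c d b + wedgeSq i j a d b c = 0 := by
  unfold wedgeSq; ring

lemma w_symm (i j a b c d : ℕ) : wedgeSq j i a b c d = wedgeSq i j a b c d := by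
  unfold wedgeSq; ring

lemma w_diag (i a b c d : ℕ) : wedgeSq i i a b c d = 0 := by
  unfold wedgeSq; ring

lemma sum2_eq {s : Finset ℕ} {t : ℕ → Finset ℕ} {f g : ℕ → ℕ → ℝ}
    (h : ∀ i j, f i j = g i j) :
    ∑ i ∈ s, ∑ j ∈ t i, f i j = ∑ i ∈ s, ∑ j ∈ t i, g i j :=
  Finset.sum_congr rfl fun i _ => Finset.sum_congr rfl fun j _ => h i j

lemma sum2_neg {s : Finset ℕ} {t : ℕ → Finset ℕ} {f g : ℕ → ℕ → ℝ}
    (h : ∀ i j, f i j = -g i j) :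
    ∑ i ∈ s, ∑ j ∈ t i, f i j = -∑ i ∈ s, ∑ j ∈ t i, g i j := by
  rw [← Finset.sum_neg_distrib]
  refine Finset.sum_congr rfl fun i _ => ?_
  rw [← Finset.sum_neg_distrib]
  exact Finset.sum_congr rfl fun j _ => h i j

lemma phi_swap1 (n a b c d : ℕ) : phiRiem n b a c d = -phiRiem n a b c d := by
  simp only [phiRiem]
  rw [sum2_neg (fun i x => w_swap1 i x a b c d), sum2_neg (fun x y => w_swap1 x y a b c d),
    w_swap1 0 1 a b c d]
  ring

lemma phi_swap2 (n a b c d : ℕ) : phiRiem n a b d c = -phiRiem n a b c d := by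
  simp only [phiRiem]
  rw [sum2_neg (fun i x => w_swap2 i x a b c d), sum2_neg (fun x y => w_swap2 x y a b c d),
    w_swap2 0 1 a b c d]
  ring

lemma phi_pair (n a b c d : ℕ) : phiRiem n c d a b = phiRiem n a b c d := by
  simp only [phiRiem]
  rw [sum2_eq (fun i x => w_pair i x a b c d), sum2_eq (fun x y => w_pair x y a b c d),
    w_pair 0 1 a b c d]

lemma phi_bianchi (n a b c d : ℕ) :
    phiRiem n a b c d + phiRiem n a c d b + phiRiem n a d b c = 0 := by
  have h1 := w_bianchi 0 1 a b c d
  have h2 : (∑ i ∈ Finset.range 2, ∑ x ∈ Finset.Ico 2 n, wedgeSq i x a b c d)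
      + (∑ i ∈ Finset.range 2, ∑ x ∈ Finset.Ico 2 n, wedgeSq i x a c d b)
      + (∑ i ∈ Finset.range 2, ∑ x ∈ Finset.Ico 2 n, wedgeSq i x a d b c) = 0 := by
    rw [← Finset.sum_add_distrib, ← Finset.sum_add_distrib]
    refine Finset.sum_eq_zero fun i _ => ?_
    rw [← Finset.sum_add_distrib, ← Finset.sum_add_distrib]
    exact Finset.sum_eq_zero fun x _ => w_bianchi i x a b c d
  have h3 : (∑ x ∈ Finset.Ico 2 n, ∑ y ∈ Finset.Ico (x + 1) n, wedgeSq x y a b c d)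
      + (∑ x ∈ Finset.Ico 2 n, ∑ y ∈ Finset.Ico (x + 1) n, wedgeSq x y a c d b)
      + (∑ x ∈ Finset.Ico 2 n, ∑ y ∈ Finset.Ico (x + 1) n, wedgeSq x y a d b c) = 0 := by
    rw [← Finset.sum_add_distrib, ← Finset.sum_add_distrib]
    refine Finset.sum_eq_zero fun x _ => ?_
    rw [← Finset.sum_add_distrib, ← Finset.sum_add_distrib]
    exact Finset.sum_eq_zero fun y _ => w_bianchi x y a b c d
  simp only [phiRiem]
  linear_combination (Nat.choose (n - 2) 2 : ℝ) * h1 - ((n : ℝ) - 3) / 2 * h2 + h3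

lemma sum_kd (s : Finset ℕ) {i : ℕ} (hi : i ∈ s) (f : ℕ → ℝ) :
    ∑ x ∈ s, kdelta i x * f x = f i := by
  simp [kdelta, ite_mul, Finset.sum_ite_eq, hi]

/-- pointwise form of the `13`-trace of one `wedgeSq`, for distinct `i j`. -/
lemma w_trace_pt (i j : ℕ) (hij : i ≠ j) (b d x : ℕ) :
    wedgeSq i j x b x d =
      kdelta i x * (kdelta j b * kdelta j d) + kdelta j x * (kdelta i b * kdelta i d) := by
  unfold wedgeSq kdelta
  split_ifs <;> simp_all

lemma w_trace {n : ℕ} (i j : ℕ) (hij : i ≠ j) (hi : i < n) (hj : j < n) (b d : ℕ) :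
    ∑ x ∈ Finset.range n, wedgeSq i j x b x d =
      kdelta i b * kdelta i d + kdelta j b * kdelta j d := by
  have h : ∀ x ∈ Finset.range n, wedgeSq i j x b x d =
      kdelta i x * (kdelta j b * kdelta j d) + kdelta j x * (kdelta i b * kdelta i d) :=
    fun x _ => w_trace_pt i j hij b d x
  rw [Finset.sum_congr rfl h, Finset.sum_add_distrib,
    sum_kd _ (Finset.mem_range.2 hi), sum_kd _ (Finset.mem_range.2 hj)]
  ring

/-- symmetrization of a triangular double sum. -/
lemma tri (m : ℕ) (f : ℕ → ℕ → ℝ) (hsymm : ∀ a b, f a b = f b a) (hdiag : ∀ a, f a a = 0)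
    (n : ℕ) :
    2 * ∑ x ∈ Finset.Ico m n, ∑ y ∈ Finset.Ico (x + 1) n, f x y =
      ∑ x ∈ Finset.Ico m n, ∑ y ∈ Finset.Ico m n, f x y := by
  induction n with
  | zero => simp
  | succ n ih =>
    rcases le_or_gt m n with hmn | hmn
    · rw [Finset.sum_Ico_succ_top hmn, Finset.sum_Ico_succ_top hmn]
      have e1 : ∑ x ∈ Finset.Ico m n, ∑ y ∈ Finset.Ico (x + 1) (n + 1), f x y
          = (∑ x ∈ Finset.Ico m n, ∑ y ∈ Finset.Ico (x + 1) n, f x y)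
            + ∑ x ∈ Finset.Ico m n, f x n := by
        rw [← Finset.sum_add_distrib]
        refine Finset.sum_congr rfl fun x hx' => ?_
        have hx2 := Finset.mem_Ico.1 hx'
        exact Finset.sum_Ico_succ_top (by omega : x + 1 ≤ n) _
      have e2 : ∑ x ∈ Finset.Ico m n, ∑ y ∈ Finset.Ico m (n + 1), f x y
          = (∑ x ∈ Finset.Ico m n, ∑ y ∈ Finset.Ico m n, f x y)
            + ∑ x ∈ Finset.Ico m n, f x n := by
        rw [← Finset.sum_add_distrib]
        exact Finset.sum_congr rfl fun x _ => Finset.sum_Ico_succ_top hmn _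
      have e3 : ∑ y ∈ Finset.Ico m (n + 1), f n y
          = (∑ x ∈ Finset.Ico m n, f x n) + f n n := by
        rw [Finset.sum_Ico_succ_top hmn]
        congr 1
        exact Finset.sum_congr rfl fun y _ => hsymm n y
      rw [e1, e2, e3, Finset.Ico_self, Finset.sum_empty, hdiag]
      linarith [ih]
    · have h0 : Finset.Ico m (n + 1) = ∅ := Finset.Ico_eq_empty (by omega)
      simp [h0]

/-- The key `13`-trace of `phiRiem` vanishes. -/
lemma trace13 (n : ℕ) (hn : 4 ≤ n) (b d : ℕ) :
    ∑ x ∈ Finset.range n, phiRiem n x b x d = 0 := by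
  have h2n : (2 : ℕ) ≤ n := by omega
  have hcard : ((Finset.Ico 2 n).card : ℝ) = (n : ℝ) - 2 := by
    rw [Nat.card_Ico]; push_cast [h2n]; ring
  have h01 : ∑ x ∈ Finset.range n, wedgeSq 0 1 x b x d =
      kdelta 0 b * kdelta 0 d + kdelta 1 b * kdelta 1 d :=
    w_trace 0 1 (by omega) (by omega) (by omega) b d
  have hS1 : ∑ x ∈ Finset.range n, ∑ i ∈ Finset.range 2, ∑ a ∈ Finset.Ico 2 n,
      wedgeSq i a x b x d
      = ((n : ℝ) - 2) * (kdelta 0 b * kdelta 0 d + kdelta 1 b * kdelta 1 d)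
        + 2 * ∑ k ∈ Finset.Ico 2 n, kdelta k b * kdelta k d := by
    rw [Finset.sum_comm]
    have h : ∀ i ∈ Finset.range 2,
        ∑ x ∈ Finset.range n, ∑ a ∈ Finset.Ico 2 n, wedgeSq i a x b x d
        = ((n : ℝ) - 2) * (kdelta i b * kdelta i d)
          + ∑ k ∈ Finset.Ico 2 n, kdelta k b * kdelta k d := by
      intro i hi
      rw [Finset.sum_comm]
      have h2 : ∀ a ∈ Finset.Ico 2 n,
          ∑ x ∈ Finset.range n, wedgeSq i a x b x d
          = kdelta i b * kdelta i d + kdelta a b * kdelta a d := by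
        intro a ha
        have ha' := Finset.mem_Ico.1 ha
        have hi' := Finset.mem_range.1 hi
        exact w_trace i a (by omega) (by omega) (by omega) b d
      rw [Finset.sum_congr rfl h2, Finset.sum_add_distrib, Finset.sum_const, nsmul_eq_mul,
        hcard]
    rw [Finset.sum_congr rfl h]
    rw [Finset.sum_range_succ, Finset.sum_range_succ, Finset.sum_range_zero]
    ring
  have hS2 : ∑ x ∈ Finset.range n, ∑ a ∈ Finset.Ico 2 n, ∑ y ∈ Finset.Ico (a + 1) n,
      wedgeSq a y x b x d
      = ((n : ℝ) - 3) * ∑ k ∈ Finset.Ico 2 n, kdelta k b * kdelta k d := by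
    rw [Finset.sum_comm]
    have swap : ∀ a ∈ Finset.Ico 2 n,
        ∑ x ∈ Finset.range n, ∑ y ∈ Finset.Ico (a + 1) n, wedgeSq a y x b x d
        = ∑ y ∈ Finset.Ico (a + 1) n, ∑ x ∈ Finset.range n, wedgeSq a y x b x d :=
      fun a _ => Finset.sum_comm
    rw [Finset.sum_congr rfl swap]
    have hFsymm : ∀ a y, (∑ x ∈ Finset.range n, wedgeSq a y x b x d)
        = ∑ x ∈ Finset.range n, wedgeSq y a x b x d :=
      fun a y => Finset.sum_congr rfl fun x _ => (w_symm a y x b x d).symm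
    have hFdiag : ∀ a, (∑ x ∈ Finset.range n, wedgeSq a a x b x d) = 0 :=
      fun a => Finset.sum_eq_zero fun x _ => w_diag a x b x d
    have htri := tri 2 (fun a y => ∑ x ∈ Finset.range n, wedgeSq a y x b x d)
      hFsymm hFdiag n
    have hsq : ∑ a ∈ Finset.Ico 2 n, ∑ y ∈ Finset.Ico 2 n,
        (∑ x ∈ Finset.range n, wedgeSq a y x b x d)
        = (2 * (n : ℝ) - 6) * ∑ k ∈ Finset.Ico 2 n, kdelta k b * kdelta k d := by
      have hrow : ∀ a ∈ Finset.Ico 2 n,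
          ∑ y ∈ Finset.Ico 2 n, (∑ x ∈ Finset.range n, wedgeSq a y x b x d)
          = ((n : ℝ) - 2) * (kdelta a b * kdelta a d)
            + (∑ k ∈ Finset.Ico 2 n, kdelta k b * kdelta k d)
            - 2 * (kdelta a b * kdelta a d) := by
        intro a ha
        have ha' := Finset.mem_Ico.1 ha
        have hpt : ∀ y ∈ Finset.Ico 2 n,
            (∑ x ∈ Finset.range n, wedgeSq a y x b x d)
            = kdelta a b * kdelta a d + kdelta y b * kdelta y d
              - kdelta a y * (2 * (kdelta a b * kdelta a d)) := by
          intro y hy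
          have hy' := Finset.mem_Ico.1 hy
          rcases eq_or_ne a y with rfl | hne
          · rw [hFdiag a]
            simp only [kdelta]
            split_ifs <;> ring
          · rw [w_trace a y hne (by omega) (by omega) b d]
            have h0 : kdelta a y = 0 := by simp [kdelta, hne]
            rw [h0]
            ring
        rw [Finset.sum_congr rfl hpt]
        rw [Finset.sum_sub_distrib, Finset.sum_add_distrib, Finset.sum_const, nsmul_eq_mul,
          hcard, sum_kd _ ha]
      rw [Finset.sum_congr rfl hrow]
      rw [Finset.sum_sub_distrib, Finset.sum_add_distrib, ← Finset.mul_sum,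
        Finset.sum_const, nsmul_eq_mul, hcard, ← Finset.mul_sum]
      ring
    linarith [htri, hsq]
  have hC : (Nat.choose (n - 2) 2 : ℝ) = ((n : ℝ) - 2) * ((n : ℝ) - 3) / 2 := by
    rw [Nat.cast_choose_two]
    have h : ((n - 2 : ℕ) : ℝ) = (n : ℝ) - 2 := by push_cast [h2n]; ring
    rw [h]; ring
  simp only [phiRiem, Finset.sum_add_distrib, Finset.sum_sub_distrib, ← Finset.mul_sum]
  rw [h01, hS1, hS2, hC]
  ring

end WeylAux

/-- For `n ≥ 4`, the tensor `φ = phiRiem n` on `ℝⁿ` (standard Euclidean metric) satisfies all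
the algebraic Weyl tensor symmetries: `φ_{abcd} = −φ_{bacd} = −φ_{abdc}`,
`φ_{abcd} = φ_{cdab}`, the first Bianchi identity `φ_{a[bcd]} = 0`, and all traces of `φ`
with respect to the (Euclidean) metric vanish. -/
theorem phiRiem_is_weyl (n : ℕ) (hn : 4 ≤ n) :
    (∀ a b c d, a < n → b < n → c < n → d < n →
      phiRiem n a b c d = -phiRiem n b a c d ∧
      phiRiem n a b c d = -phiRiem n a b d c ∧
      phiRiem n a b c d = phiRiem n c d a b ∧
      phiRiem n a b c d + phiRiem n a c d b + phiRiem n a d b c = 0) ∧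
    (∀ c d, c < n → d < n → ∑ x ∈ Finset.range n, phiRiem n x x c d = 0) ∧
    (∀ b d, b < n → d < n → ∑ x ∈ Finset.range n, phiRiem n x b x d = 0) ∧
    (∀ b c, b < n → c < n → ∑ x ∈ Finset.range n, phiRiem n x b c x = 0) ∧
    (∀ a d, a < n → d < n → ∑ x ∈ Finset.range n, phiRiem n a x x d = 0) ∧
    (∀ a c, a < n → c < n → ∑ x ∈ Finset.range n, phiRiem n a x c x = 0) ∧
    (∀ a b, a < n → b < n → ∑ x ∈ Finset.range n, phiRiem n a b x x = 0) := by
  open WeylAux in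
  refine ⟨?_, ?_, ?_, ?_, ?_, ?_, ?_⟩
  · intro a b c d _ _ _ _
    refine ⟨?_, ?_, (phi_pair n a b c d).symm, phi_bianchi n a b c d⟩
    · rw [phi_swap1 n a b c d]; ring
    · rw [phi_swap2 n a b c d]; ring
  · intro c d _ _
    exact Finset.sum_eq_zero fun x _ => by have := phi_swap1 n x x c d; linarith
  · intro b d _ _; exact trace13 n hn b d
  · intro b c _ _
    have h : ∀ x ∈ Finset.range n, phiRiem n x b c x = -phiRiem n x b x c :=
      fun x _ => phi_swap2 n x b x c
    rw [Finset.sum_congr rfl h, Finset.sum_neg_distrib, trace13 n hn b c, neg_zero]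
  · intro a d _ _
    have h : ∀ x ∈ Finset.range n, phiRiem n a x x d = -phiRiem n x d x a :=
      fun x _ => (phi_pair n x d a x).trans (phi_swap2 n x d x a)
    rw [Finset.sum_congr rfl h, Finset.sum_neg_distrib, trace13 n hn d a, neg_zero]
  · intro a c _ _
    have h : ∀ x ∈ Finset.range n, phiRiem n a x c x = phiRiem n x a x c := by
      intro x _
      rw [phi_swap1 n x a c x, phi_swap2 n x a x c]; ring
    rw [Finset.sum_congr rfl h]
    exact trace13 n hn a c
  · intro a b _ _
    exact Finset.sum_eq_zero fun x _ => by have := phi_swap2 n a b x x; linarith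
end

section
/- For type A_ℓ and 1 ≤ k ≤ ⌊(ℓ+1)/2⌋, the irreducible representation with highest weight λ_k + λ_{ℓ+1-k} has dimension ((ℓ+2−2k)/(ℓ+2))·C(ℓ+2,k)², and this is never strictly less than dim A_ℓ = ℓ(ℓ+2) for ℓ ≥ 2 and k ≥ 1 with k ≤ (ℓ+1)/2. -/
lemma choose_two_le_choose {n k : ℕ} (h2 : 2 ≤ k) (hn : 2 * k ≤ n) :
    n.choose 2 ≤ n.choose k := by
  induction k, h2 using Nat.le_induction with
  | base => exact le_rfl
  | succ k hk ih =>
    exact le_trans (ih (by omega)) (Nat.choose_le_succ_of_lt_half_left (by omega))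

/-- For type `A_ℓ` (`ℓ ≥ 2`) and `1 ≤ k ≤ ⌊(ℓ+1)/2⌋`, the irreducible representation with
highest weight `λ_k + λ_{ℓ+1-k}` has dimension `((ℓ+2-2k)/(ℓ+2)) · C(ℓ+2,k)²`, which is never
strictly less than `dim A_ℓ = ℓ(ℓ+2)`. -/
theorem selfdual_pair_dim_A (ℓ k : ℕ) (hℓ : 2 ≤ ℓ) (hk : 1 ≤ k) (hk2 : 2 * k ≤ ℓ + 1) :
    (ℓ : ℚ) * ((ℓ : ℚ) + 2) ≤
      (((ℓ : ℚ) + 2 - 2 * k) / ((ℓ : ℚ) + 2)) * (Nat.choose (ℓ + 2) k : ℚ) ^ 2 := by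
  have hn : (0 : ℚ) < (ℓ : ℚ) + 2 := by positivity
  rw [div_mul_eq_mul_div, le_div_iff₀ hn]
  have hℓQ : (2 : ℚ) ≤ (ℓ : ℚ) := by exact_mod_cast hℓ
  rcases eq_or_lt_of_le hk with h1 | h2
  · -- k = 1
    subst h1
    simp [Nat.choose_one_right]
    push_cast
    ring_nf
    exact le_rfl
  · -- k ≥ 2
    have hC : (ℓ + 2).choose 2 ≤ (ℓ + 2).choose k :=
      choose_two_le_choose h2 (by omega)
    have hdvd : 2 ∣ (ℓ + 2) * (ℓ + 1) := by
      have := Nat.even_mul_succ_self (ℓ + 1)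
      rw [mul_comm] at this
      exact this.two_dvd
    have hC2' : 2 * (ℓ + 2).choose 2 = (ℓ + 2) * (ℓ + 1) := by
      rw [Nat.choose_two_right]
      show 2 * ((ℓ + 2) * (ℓ + 1) / 2) = _
      exact Nat.mul_div_cancel' hdvd
    have hCQ : ((ℓ : ℚ) + 2) * ((ℓ : ℚ) + 1) ≤ 2 * ((ℓ + 2).choose k : ℚ) := by
      have : ((ℓ : ℚ) + 2) * ((ℓ : ℚ) + 1) = (2 * (ℓ + 2).choose 2 : ℕ) := by
        rw [hC2']; push_cast; ring
      rw [this]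
      exact_mod_cast Nat.mul_le_mul_left 2 hC
    have hkQ : 2 * (k : ℚ) ≤ (ℓ : ℚ) + 1 := by exact_mod_cast hk2
    have hCpos : (0 : ℚ) ≤ ((ℓ + 2).choose k : ℚ) := by positivity
    nlinarith [sq_nonneg ((ℓ : ℚ) - 1), sq_nonneg (2 * ((ℓ + 2).choose k : ℚ) - ((ℓ : ℚ) + 2) * ((ℓ : ℚ) + 1))]
end

section
/- Let p₁ ⊂ so(1,5) be the parabolic with Levi decomposition p₁ = (ℝ ⊕ so(4)) ⋉ ℝ⁴, π: p₁ → ℝ ⊕ so(4) the projection, and k ⊂ p₁ a subalgebra with dim k ≥ 8 such that so(4) ⊄ π(k). Then k ⊇ ℝ⁴ (the abelian nilradical r₁). -/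
/-- Membership in the parabolic subalgebra `p₁ ⊂ so(1,5)` stabilizing a null line: in the
basis `e₀, …, e₅` where the Lorentzian metric is `[[0,0,1],[0,I₄,0],[1,0,0]]` (block form),
`p₁` consists of the matrices `[[r, -vᵀ, 0],[0, R, v],[0, 0, -r]]` with `r ∈ ℝ`,
`R ∈ so(4)`, `v ∈ ℝ⁴`; so `p₁ = (ℝ ⊕ so(4)) ⋉ ℝ⁴`. -/
def memP1 (n : ℕ) (X : Matrix (Fin n) (Fin n) ℝ) : Prop :=
  ∀ i j : Fin n,
    (1 ≤ i.val → j.val = 0 → X i j = 0) ∧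
    (i.val = n - 1 → j.val ≤ n - 2 → X i j = 0) ∧
    (i.val = 0 → j.val = n - 1 → X i j = 0) ∧
    (1 ≤ i.val → i.val ≤ n - 2 → 1 ≤ j.val → j.val ≤ n - 2 → X i j = -X j i) ∧
    (i.val = n - 1 → j.val = n - 1 → ∀ k l : Fin n, k.val = 0 → l.val = 0 →
      X i j = -X k l) ∧
    (i.val = 0 → 1 ≤ j.val → j.val ≤ n - 2 → ∀ k : Fin n, k.val = n - 1 →
      X i j = -X j k)

/-- Membership in the abelian nilradical `r₁ ≅ ℝ^{n-2}` of `p₁`. -/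
def memR1 (n : ℕ) (X : Matrix (Fin n) (Fin n) ℝ) : Prop :=
  memP1 n X ∧
  (∀ i j : Fin n, 1 ≤ i.val → i.val ≤ n - 2 → 1 ≤ j.val → j.val ≤ n - 2 → X i j = 0) ∧
  (∀ i j : Fin n, i.val = j.val → X i j = 0)

/-- The projection `π : p₁ → r₀ = ℝ ⊕ so(n-2)` killing the nilradical `r₁`. -/
def piP1 (n : ℕ) (X : Matrix (Fin n) (Fin n) ℝ) : Matrix (Fin n) (Fin n) ℝ :=
  Matrix.of fun i j =>
    if (i.val = 0 ∧ 1 ≤ j.val ∧ j.val ≤ n - 2) ∨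
       (1 ≤ i.val ∧ i.val ≤ n - 2 ∧ j.val = n - 1) then 0 else X i j

/-- Membership in the copy of `so(n-2)` inside `r₀ ⊂ p₁`. -/
def memSOInner (n : ℕ) (X : Matrix (Fin n) (Fin n) ℝ) : Prop :=
  (∀ i j : Fin n, 1 ≤ i.val → i.val ≤ n - 2 → 1 ≤ j.val → j.val ≤ n - 2 → X i j = -X j i) ∧
  (∀ i j : Fin n, i.val = 0 ∨ i.val = n - 1 ∨ j.val = 0 ∨ j.val = n - 1 → X i j = 0)

attribute [local instance 100] LieRing.ofAssociativeRing

/-!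
Let `V ⊆ ℝ⁴` be `k ∩ r₁`. It is the kernel of `π` on `k`, so `dim k = dim π(k) + dim V`; and since
`r₁` is an abelian ideal, `[X, Z] ∈ k ∩ r₁` for `X ∈ k`, `Z ∈ k ∩ r₁` shows that the `so(4)`-part
of `π(k)` preserves `V`. A skew-adjoint map preserving `V` also preserves `V^⊥`, so those maps embed
into `so(V) ⊕ so(V^⊥)`. If `V ≠ ℝ⁴` has dimension `d < 4`, this gives
`dim k ≤ 1 + C(d, 2) + C(4 - d, 2) + d ≤ 7`, contradicting `dim k ≥ 8`.
-/

open Module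
open scoped InnerProductSpace Matrix

section SkewAdjoint

variable {E : Type*} [NormedAddCommGroup E] [InnerProductSpace ℝ E]

theorem mem_skewAdjointSubmodule_innerₗ {T : Module.End ℝ E} :
    T ∈ (innerₗ E).skewAdjointSubmodule ↔ ∀ x y, ⟪T x, y⟫_ℝ = -⟪x, T y⟫_ℝ := by
  simp [LinearMap.mem_skewAdjointSubmodule, LinearMap.IsSkewAdjoint, LinearMap.IsAdjointPair]

theorem inner_apply_self_eq_zero_of_mem_skewAdjointSubmodule {T : Module.End ℝ E}
    (hT : T ∈ (innerₗ E).skewAdjointSubmodule) (x : E) : ⟪T x, x⟫_ℝ = 0 := by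
  have h := mem_skewAdjointSubmodule_innerₗ.1 hT x x
  rw [real_inner_comm (T x) x] at h
  linarith

theorem finrank_skewAdjointSubmodule_innerₗ_le [FiniteDimensional ℝ E] :
    finrank ℝ (innerₗ E).skewAdjointSubmodule ≤ (finrank ℝ E).choose 2 := by
  set S := (innerₗ E).skewAdjointSubmodule
  let b := finBasis ℝ E
  let ι := {q : Fin (finrank ℝ E) × Fin (finrank ℝ E) // q.1 < q.2}
  let Φ : S →ₗ[ℝ] ι → ℝ := LinearMap.pi fun q =>
    (innerₗ E).flip (b q.1.2) ∘ₗ LinearMap.applyₗ (b q.1.1) ∘ₗ S.subtype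
  have hΦ : Function.Injective Φ := by
    rw [← LinearMap.ker_eq_bot, LinearMap.ker_eq_bot']
    rintro ⟨T, hT⟩ hΦT
    have hpair (i j) (hij : i < j) : ⟪T (b i), b j⟫_ℝ = 0 := congrFun hΦT ⟨(i, j), hij⟩
    have hall (i j) : ⟪T (b i), b j⟫_ℝ = 0 := by
      rcases lt_trichotomy i j with hij | rfl | hji
      · exact hpair i j hij
      · exact inner_apply_self_eq_zero_of_mem_skewAdjointSubmodule hT _
      · rw [mem_skewAdjointSubmodule_innerₗ.1 hT, real_inner_comm, hpair j i hji, neg_zero]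
    ext1
    exact b.ext fun i => InnerProductSpace.ext_inner_right_basis b fun j => by simpa using hall i j
  calc finrank ℝ S ≤ finrank ℝ (ι → ℝ) := LinearMap.finrank_le_finrank_of_injective hΦ
    _ = (finrank ℝ E).choose 2 := by
      simp [ι, Fintype.card_subtype, Fintype.card_product_filter_lt]

theorem apply_mem_orthogonal_of_mem_skewAdjointSubmodule {T : Module.End ℝ E}
    (hT : T ∈ (innerₗ E).skewAdjointSubmodule) {V : Submodule ℝ E} (hV : ∀ x ∈ V, T x ∈ V)
    {x : E} (hx : x ∈ Vᗮ) : T x ∈ Vᗮ := fun u hu => by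
  rw [real_inner_comm, mem_skewAdjointSubmodule_innerₗ.1 hT, real_inner_comm,
    Submodule.inner_right_of_mem_orthogonal (hV u hu) hx, neg_zero]

theorem restrict_mem_skewAdjointSubmodule {T : Module.End ℝ E}
    (hT : T ∈ (innerₗ E).skewAdjointSubmodule) {V : Submodule ℝ E} (hV : ∀ x ∈ V, T x ∈ V) :
    T.restrict hV ∈ (innerₗ V).skewAdjointSubmodule :=
  mem_skewAdjointSubmodule_innerₗ.2 fun x y => mem_skewAdjointSubmodule_innerₗ.1 hT x y

theorem finrank_le_choose_two_add_choose_two_of_mapsTo [FiniteDimensional ℝ E]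
    (V : Submodule ℝ E) {S : Submodule ℝ (Module.End ℝ E)}
    (hS : S ≤ (innerₗ E).skewAdjointSubmodule) (hV : ∀ T ∈ S, ∀ x ∈ V, T x ∈ V) :
    finrank ℝ S ≤ (finrank ℝ V).choose 2 + (finrank ℝ Vᗮ).choose 2 := by
  have hVperp (T : S) : ∀ x ∈ Vᗮ, T.1 x ∈ Vᗮ := fun _ =>
    apply_mem_orthogonal_of_mem_skewAdjointSubmodule (hS T.2) (hV T T.2)
  let ρ : S →ₗ[ℝ] (innerₗ V).skewAdjointSubmodule × (innerₗ Vᗮ).skewAdjointSubmodule :=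
    { toFun T := (⟨T.1.restrict (hV T T.2), restrict_mem_skewAdjointSubmodule (hS T.2) _⟩,
        ⟨T.1.restrict (hVperp T), restrict_mem_skewAdjointSubmodule (hS T.2) _⟩)
      map_add' _ _ := rfl
      map_smul' _ _ := rfl }
  have hρ : Function.Injective ρ := by
    rw [← LinearMap.ker_eq_bot, LinearMap.ker_eq_bot']
    rintro T hT
    obtain ⟨hT₁, hT₂⟩ := Prod.ext_iff.1 hT
    ext1; ext1 x
    obtain ⟨y, hy, z, hz, rfl⟩ := V.exists_add_mem_mem_orthogonal x
    have h₁ : T.1 y = 0 :=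
      congrArg (fun f : (innerₗ V).skewAdjointSubmodule => (f.1 ⟨y, hy⟩ : E)) hT₁
    have h₂ : T.1 z = 0 :=
      congrArg (fun f : (innerₗ Vᗮ).skewAdjointSubmodule => (f.1 ⟨z, hz⟩ : E)) hT₂
    simp [h₁, h₂]
  calc finrank ℝ S
      ≤ finrank ℝ ((innerₗ V).skewAdjointSubmodule × (innerₗ Vᗮ).skewAdjointSubmodule) :=
        LinearMap.finrank_le_finrank_of_injective hρ
    _ ≤ _ := by
      rw [Module.finrank_prod]
      exact add_le_add finrank_skewAdjointSubmodule_innerₗ_le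
        finrank_skewAdjointSubmodule_innerₗ_le

end SkewAdjoint

theorem Matrix.toEuclideanLin_mem_skewAdjointSubmodule {n : Type*} [Fintype n] [DecidableEq n]
    {A : Matrix n n ℝ} (hA : Aᵀ = -A) :
    A.toEuclideanLin ∈ (innerₗ (EuclideanSpace ℝ n)).skewAdjointSubmodule := by
  refine mem_skewAdjointSubmodule_innerₗ.2 fun x y => ?_
  rw [← LinearMap.adjoint_inner_right, ← Matrix.toEuclideanLin_conjTranspose_eq_adjoint,
    Matrix.conjTranspose_eq_transpose_of_trivial, hA, map_neg, LinearMap.neg_apply,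
    inner_neg_right]

theorem Submodule.finrank_le_one_add_finrank_map_snd {K M : Type*} [Field K] [AddCommGroup M]
    [Module K M] [FiniteDimensional K M] (H : Submodule K (K × M)) :
    finrank K H ≤ 1 + finrank K (H.map (LinearMap.snd K K M)) := by
  set f := (LinearMap.snd K K M).domRestrict H
  have hfst : Function.Injective
      (LinearMap.fst K K M ∘ₗ H.subtype ∘ₗ (LinearMap.ker f).subtype) := by
    rintro ⟨⟨p, hp⟩, hpf⟩ ⟨⟨q, hq⟩, hqf⟩ h
    have hp2 : p.2 = 0 := hpf
    have hq2 : q.2 = 0 := hqf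
    exact Subtype.ext (Subtype.ext (Prod.ext h (hp2.trans hq2.symm)))
  have hker := LinearMap.finrank_le_finrank_of_injective hfst
  rw [finrank_self] at hker
  have := f.finrank_range_add_finrank_ker
  rw [LinearMap.range_domRestrict] at this
  omega

namespace P1

abbrev E4 := EuclideanSpace ℝ (Fin 4)

def mk (r : ℝ) (R : Matrix (Fin 4) (Fin 4) ℝ) (v : E4) : Matrix (Fin 6) (Fin 6) ℝ :=
  !![r, -v 0, -v 1, -v 2, -v 3, 0;
     0, R 0 0, R 0 1, R 0 2, R 0 3, v 0;
     0, R 1 0, R 1 1, R 1 2, R 1 3, v 1;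
     0, R 2 0, R 2 1, R 2 2, R 2 3, v 2;
     0, R 3 0, R 3 1, R 3 2, R 3 3, v 3;
     0, 0, 0, 0, 0, -r]

def innerIndex (i : Fin 4) : Fin 6 := i.succ.castSucc

theorem innerIndex_val (i : Fin 4) : (innerIndex i).val = i.val + 1 := rfl

def leviPart : Matrix (Fin 6) (Fin 6) ℝ →ₗ[ℝ] ℝ × Matrix (Fin 4) (Fin 4) ℝ where
  toFun X := (X 0 0, X.submatrix innerIndex innerIndex)
  map_add' _ _ := rfl
  map_smul' _ _ := rfl

def nilPart : Matrix (Fin 6) (Fin 6) ℝ →ₗ[ℝ] E4 where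
  toFun X := WithLp.toLp 2 fun i => X (innerIndex i) 5
  map_add' _ _ := rfl
  map_smul' _ _ := rfl

def mkNil : E4 →ₗ[ℝ] Matrix (Fin 6) (Fin 6) ℝ where
  toFun v := mk 0 0 v
  map_add' v w := by ext i j; fin_cases i <;> fin_cases j <;> simp [mk, add_comm]
  map_smul' c v := by ext i j; fin_cases i <;> fin_cases j <;> simp [mk]

theorem leviPart_apply (X : Matrix (Fin 6) (Fin 6) ℝ) :
    leviPart X = (X 0 0, X.submatrix innerIndex innerIndex) := rfl

theorem nilPart_apply (X : Matrix (Fin 6) (Fin 6) ℝ) (i : Fin 4) :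
    nilPart X i = X (innerIndex i) 5 := rfl

@[simp] theorem mkNil_apply (v : E4) : mkNil v = mk 0 0 v := rfl

@[simp] theorem leviPart_mk (r : ℝ) (R : Matrix (Fin 4) (Fin 4) ℝ) (v : E4) :
    leviPart (mk r R v) = (r, R) := by
  ext i j
  · rfl
  · fin_cases i <;> fin_cases j <;> rfl

@[simp] theorem nilPart_mk (r : ℝ) (R : Matrix (Fin 4) (Fin 4) ℝ) (v : E4) :
    nilPart (mk r R v) = v := by
  ext i
  fin_cases i <;> rfl

theorem eq_mk_of_memP1 {X : Matrix (Fin 6) (Fin 6) ℝ} (hX : memP1 6 X) :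
    X = mk (leviPart X).1 (leviPart X).2 (nilPart X) := by
  have hcol (i : Fin 6) (hi : 1 ≤ i.val) : X i 0 = 0 := (hX i 0).1 hi rfl
  have hrow (j : Fin 6) (hj : j.val ≤ 4) : X 5 j = 0 := (hX 5 j).2.1 rfl hj
  have hcorner : X 0 5 = 0 := (hX 0 5).2.2.1 rfl rfl
  have hdiag : X 5 5 = -X 0 0 := (hX 5 5).2.2.2.2.1 rfl rfl 0 0 rfl rfl
  have htop (j : Fin 6) (h₁ : 1 ≤ j.val) (h₂ : j.val ≤ 4) : X 0 j = -X j 5 :=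
    (hX 0 j).2.2.2.2.2 rfl h₁ h₂ 5 rfl
  ext i j
  fin_cases i <;> fin_cases j <;>
    simp [mk, leviPart_apply, nilPart_apply, innerIndex, hcol, hrow, hcorner, hdiag, htop]

theorem transpose_leviPart_snd {X : Matrix (Fin 6) (Fin 6) ℝ} (hX : memP1 6 X) :
    (leviPart X).2ᵀ = -(leviPart X).2 := by
  ext i j
  have := (hX (innerIndex j) (innerIndex i)).2.2.2.1
  simp only [innerIndex_val] at this
  simpa [leviPart_apply] using this (by omega) (by omega) (by omega) (by omega)

theorem eq_mkNil_of_leviPart_eq_zero {X : Matrix (Fin 6) (Fin 6) ℝ} (hX : memP1 6 X)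
    (h : leviPart X = 0) : X = mkNil (nilPart X) := by
  simpa [h] using eq_mk_of_memP1 hX

theorem eq_mkNil_of_memR1 {X : Matrix (Fin 6) (Fin 6) ℝ} (hX : memR1 6 X) :
    X = mkNil (nilPart X) := by
  obtain ⟨hP, hinner, hdiag⟩ := hX
  refine eq_mkNil_of_leviPart_eq_zero hP ?_
  ext i j
  · exact hdiag 0 0 rfl
  · simpa [leviPart_apply] using hinner _ _ (by simp [innerIndex_val])
      (by simp [innerIndex_val]) (by simp [innerIndex_val]) (by simp [innerIndex_val])

theorem leviPart_lie_mkNil (r : ℝ) (R : Matrix (Fin 4) (Fin 4) ℝ) (w v : E4) :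
    leviPart ⁅mk r R w, mkNil v⁆ = 0 := by
  ext i j <;>
  simp only [mkNil_apply, leviPart_apply, Ring.lie_def, Matrix.submatrix_apply, Matrix.sub_apply,
    Matrix.mul_apply, Fin.sum_univ_six, Prod.fst_zero, Prod.snd_zero, Matrix.zero_apply]
  · simp [mk]
  · fin_cases i <;> fin_cases j <;> simp [mk, innerIndex]

theorem nilPart_lie_mkNil (r : ℝ) (R : Matrix (Fin 4) (Fin 4) ℝ) (w v : E4) :
    nilPart ⁅mk r R w, mkNil v⁆ = R.toEuclideanLin v + r • v := by
  ext i
  simp only [mkNil_apply, nilPart_apply, Ring.lie_def, Matrix.sub_apply, Matrix.mul_apply,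
    Fin.sum_univ_six, PiLp.add_apply, PiLp.smul_apply, Matrix.ofLp_toLpLin, Matrix.toLin'_apply,
    Matrix.mulVec, dotProduct, Fin.sum_univ_four]
  fin_cases i <;> simp [mk, innerIndex] <;> ring

section Subalgebra

variable {k : LieSubalgebra ℝ (Matrix (Fin 6) (Fin 6) ℝ)}

def nilSubspace (k : LieSubalgebra ℝ (Matrix (Fin 6) (Fin 6) ℝ)) : Submodule ℝ E4 :=
  k.toSubmodule.comap mkNil

noncomputable def rotationPart (k : LieSubalgebra ℝ (Matrix (Fin 6) (Fin 6) ℝ)) :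
    Submodule ℝ (Module.End ℝ E4) :=
  k.toSubmodule.map (Matrix.toEuclideanLin.toLinearMap ∘ₗ LinearMap.snd ℝ ℝ _ ∘ₗ leviPart)

theorem finrank_map_leviPart_add_finrank_nilSubspace (hk : ∀ X ∈ k, memP1 6 X) :
    finrank ℝ (k.toSubmodule.map leviPart) + finrank ℝ (nilSubspace k) = finrank ℝ k := by
  let f := leviPart.domRestrict k.toSubmodule
  let φ : nilSubspace k →ₗ[ℝ] k.toSubmodule := mkNil.restrict fun _ h => h
  have hφ : Function.Injective φ := fun v w h => by
    have h' : nilPart (mkNil v) = nilPart (mkNil w) :=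
      congrArg (fun X : k.toSubmodule => nilPart X.1) h
    exact Subtype.ext (by simpa using h')
  have hrange : LinearMap.range φ = LinearMap.ker f := by
    ext ⟨X, hX⟩
    refine ⟨fun ⟨v, hv⟩ => ?_, fun hf => ?_⟩
    · have hXv : X = mkNil v := (congrArg Subtype.val hv).symm
      show leviPart X = 0
      simp [hXv]
    · have hXv := eq_mkNil_of_leviPart_eq_zero (hk X hX) hf
      exact ⟨⟨nilPart X, show mkNil (nilPart X) ∈ k from hXv ▸ hX⟩, Subtype.ext hXv.symm⟩
  have := f.finrank_range_add_finrank_ker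
  rwa [← hrange, LinearMap.finrank_range_of_inj hφ, LinearMap.range_domRestrict] at this

theorem finrank_map_leviPart_le :
    finrank ℝ (k.toSubmodule.map leviPart) ≤ 1 + finrank ℝ (rotationPart k) := by
  rw [rotationPart, Submodule.map_comp, Submodule.map_comp, LinearEquiv.finrank_map_eq]
  exact Submodule.finrank_le_one_add_finrank_map_snd _

theorem rotationPart_le_skewAdjointSubmodule (hk : ∀ X ∈ k, memP1 6 X) :
    rotationPart k ≤ (innerₗ E4).skewAdjointSubmodule := by
  rintro _ ⟨X, hX, rfl⟩
  exact Matrix.toEuclideanLin_mem_skewAdjointSubmodule (transpose_leviPart_snd (hk X hX))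

theorem apply_mem_nilSubspace_of_mem_rotationPart (hk : ∀ X ∈ k, memP1 6 X)
    {T : Module.End ℝ E4} (hT : T ∈ rotationPart k) {v : E4} (hv : v ∈ nilSubspace k) :
    T v ∈ nilSubspace k := by
  obtain ⟨X, hXk, rfl⟩ := hT
  obtain ⟨r, R, w, rfl⟩ : ∃ r R w, X = mk r R w := ⟨_, _, _, eq_mk_of_memP1 (hk X hXk)⟩
  have hbr : ⁅mk r R w, mkNil v⁆ ∈ k := k.lie_mem hXk hv
  have hRv : R.toEuclideanLin v + r • v ∈ nilSubspace k := by
    rw [← nilPart_lie_mkNil r R w v]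
    show mkNil (nilPart _) ∈ k
    rwa [← eq_mkNil_of_leviPart_eq_zero (hk _ hbr) (leviPart_lie_mkNil r R w v)]
  simpa using sub_mem hRv (Submodule.smul_mem _ r hv)

theorem finrank_le_seven_of_nilSubspace_ne_top (hk : ∀ X ∈ k, memP1 6 X)
    (hV : nilSubspace k ≠ ⊤) : finrank ℝ k ≤ 7 := by
  have hsplit := finrank_map_leviPart_add_finrank_nilSubspace hk
  have hlevi := finrank_map_leviPart_le (k := k)
  have hrot := finrank_le_choose_two_add_choose_two_of_mapsTo (nilSubspace k)
    (rotationPart_le_skewAdjointSubmodule hk)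
    fun _ hT _ hv => apply_mem_nilSubspace_of_mem_rotationPart hk hT hv
  have hcompl : finrank ℝ (nilSubspace k) + finrank ℝ (nilSubspace k)ᗮ = 4 := by
    simpa using (nilSubspace k).finrank_add_finrank_orthogonal
  have hlt : finrank ℝ (nilSubspace k) < 4 := by simpa using Submodule.finrank_lt hV
  have hcount : ∀ d < 4, 1 + d.choose 2 + (4 - d).choose 2 + d ≤ 7 := by decide
  have := hcount _ hlt
  rw [show finrank ℝ (nilSubspace k)ᗮ = 4 - finrank ℝ (nilSubspace k) by omega] at hrot
  omega

end Subalgebra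

end P1

theorem so15_subalgebra_contains_nilradical_general
    (k : LieSubalgebra ℝ (Matrix (Fin 6) (Fin 6) ℝ))
    (hsub : ∀ X ∈ k, memP1 6 X)
    (hdim : 8 ≤ Module.finrank ℝ ↥k) :
    ∀ X, memR1 6 X → X ∈ k := by
  intro X hX
  have htop : P1.nilSubspace k = ⊤ := by
    by_contra hV
    have := P1.finrank_le_seven_of_nilSubspace_ne_top hsub hV
    omega
  have hmem : P1.nilPart X ∈ P1.nilSubspace k := htop ▸ Submodule.mem_top
  rw [P1.eq_mkNil_of_memR1 hX]
  exact hmem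

/-- Let `p₁ ⊂ so(1,5)` be the parabolic with Levi decomposition `p₁ = (ℝ ⊕ so(4)) ⋉ ℝ⁴`,
`π : p₁ → ℝ ⊕ so(4)` the projection, and `k ⊂ p₁` a Lie subalgebra with `dim k ≥ 8` such
that `so(4) ⊄ π(k)`.  Then `k` contains the abelian nilradical `r₁ = ℝ⁴`. -/
theorem so15_subalgebra_contains_nilradical
    (k : LieSubalgebra ℝ (Matrix (Fin 6) (Fin 6) ℝ))
    (hsub : ∀ X ∈ k, memP1 6 X)
    (hso : ¬ ∀ X : Matrix (Fin 6) (Fin 6) ℝ, memSOInner 6 X → ∃ Y ∈ k, piP1 6 Y = X)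
    (hdim : 8 ≤ Module.finrank ℝ ↥k) :
    ∀ X, memR1 6 X → X ∈ k :=
  so15_subalgebra_contains_nilradical_general k hsub hdim
end

section
/- For gl(ℓ,ℂ) embedded in so(2ℓ,ℂ) as the stabilizer of an isotropic decomposition ℂ^{2ℓ} = V ⊕ V*, an involutive automorphism X ↦ AXA⁻¹ of so(2ℓ,ℂ) (A ∈ O(2ℓ,ℂ), A² = ±1) preserving gl(ℓ,ℂ) either preserves both V and V* or interchanges them; if it interchanges them and A² = −1, then in a basis adapted to (V,V*), A = [[0, M],[−M⁻¹, 0]] with Mᵗ = −M (so ℓ must be even). -/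
/-!
Write `A = [[a, b], [c, d]]`. Conjugation by `A` preserving `gl` says that the off-diagonal blocks
of `A * diag(B, -Bᵀ) * A` vanish: `a B b = b Bᵀ d` and `c B a = d Bᵀ c` for all `B`. With `B = 1`
and the off-diagonal blocks of `A² = ε` this gives `a b = 0 = d c`, hence `a B (b c) = b Bᵀ (d c) = 0`
for all `B`. The matrix ring being prime, `a = 0` or `b c = 0`; in the latter case `a² = ε` makes
`a` invertible and `a b = 0` forces `b = 0`. Symmetrically `d = 0` or `c = 0`, and orthogonality
(`dᵀ = ε a`, `bᵀ = ε b`) ties `a = 0` to `d = 0`. In the antidiagonal case with `ε = -1` we get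
`b c = -1` and `bᵀ = -b`, and an invertible skew-symmetric matrix has even size because
`det b = det (-b) = (-1)^ℓ det b`.
-/

open Matrix

lemma eq_zero_of_eq_of_add_eq_zero (K : Type*) [Field K] [NeZero (2 : K)] {V : Type*}
    [AddCommGroup V] [Module K V] {x y : V} (hxy : x = y) (hsum : x + y = 0) : x = 0 := by
  rw [← hxy, ← two_smul K] at hsum
  exact (smul_eq_zero.mp hsum).resolve_left two_ne_zero

namespace Matrix

variable {n R K : Type*} [Fintype n] [DecidableEq n]

lemma mul_single_mul_apply [Semiring R] (a x : Matrix n n R) (i j k l : n) :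
    (a * single j k (1 : R) * x) i l = a i j * x k l := by
  simp [mul_apply, single_apply, ite_and]

lemma eq_zero_or_eq_zero_of_forall_mul_mul_eq_zero [Semiring R] [NoZeroDivisors R]
    {a x : Matrix n n R} (h : ∀ B, a * B * x = 0) : a = 0 ∨ x = 0 := by
  refine or_iff_not_imp_left.mpr fun ha => ext fun k l => ?_
  obtain ⟨i, j, hij⟩ : ∃ i j, a i j ≠ 0 := by
    by_contra! h0
    exact ha (ext h0)
  have := congrFun₂ (h (single j k (1 : R))) i l
  rw [mul_single_mul_apply, zero_apply] at this
  exact (mul_eq_zero.mp this).resolve_left hij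

variable [Field K]

lemma even_card_of_isUnit_of_transpose_eq_neg [NeZero (2 : K)] {M : Matrix n n K}
    (hM : IsUnit M) (hskew : Mᵀ = -M) : Even (Fintype.card n) := by
  by_contra hodd
  have hdet : M.det = -M.det := by
    simpa [det_neg, (Nat.not_even_iff_odd.mp hodd).neg_one_pow] using congrArg det hskew
  have hdet0 : M.det = 0 := by
    rw [eq_neg_iff_add_eq_zero, ← two_mul] at hdet
    exact (mul_eq_zero.mp hdet).resolve_left two_ne_zero
  exact ((isUnit_iff_isUnit_det M).mp hM).ne_zero hdet0

lemma eq_zero_or_eq_zero_of_forall_mul_mul_eq_mul_transpose_mul {a b c d : Matrix n n K} {ε : K}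
    (hε : ε ≠ 0) (htw : ∀ B, a * B * b = b * Bᵀ * d) (hab : a * b = 0) (hdc : d * c = 0)
    (hsq : a * a + b * c = ε • 1) : a = 0 ∨ b = 0 := by
  have hbc : a = 0 ∨ b * c = 0 := eq_zero_or_eq_zero_of_forall_mul_mul_eq_zero fun B => by
    rw [← Matrix.mul_assoc, htw, Matrix.mul_assoc, hdc, Matrix.mul_zero]
  refine hbc.imp_right fun hbc => ?_
  rw [hbc, add_zero] at hsq
  calc b = ε⁻¹ • (a * a) * b := by rw [hsq, smul_smul, inv_mul_cancel₀ hε, one_smul, one_mul]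
    _ = ε⁻¹ • (a * (a * b)) := by rw [smul_mul_assoc, Matrix.mul_assoc]
    _ = 0 := by rw [hab, Matrix.mul_zero, smul_zero]

lemma fromBlocks_mul_self_eq_smul_one_iff {a b c d : Matrix n n K} {ε : K} :
    fromBlocks a b c d * fromBlocks a b c d = ε • 1 ↔
      a * a + b * c = ε • 1 ∧ a * b + b * d = 0 ∧ c * a + d * c = 0 ∧ c * b + d * d = ε • 1 := by
  rw [fromBlocks_multiply, ← fromBlocks_one, fromBlocks_smul, smul_zero, fromBlocks_inj]

lemma transpose_blocks_of_orthogonal {a b c d : Matrix n n K} {ε : K} (hε : ε * ε = 1)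
    (hsq : fromBlocks a b c d * fromBlocks a b c d = ε • 1)
    (hO : (fromBlocks a b c d)ᵀ * fromBlocks 0 1 1 0 * fromBlocks a b c d = fromBlocks 0 1 1 0) :
    bᵀ = ε • b ∧ dᵀ = ε • a := by
  set A := fromBlocks a b c d
  set Q : Matrix (n ⊕ n) (n ⊕ n) K := fromBlocks 0 1 1 0
  have hQ : Aᵀ * Q = ε • (Q * A) :=
    calc Aᵀ * Q = Aᵀ * Q * (A * (ε • A)) := by
          rw [Matrix.mul_smul, hsq, smul_smul, hε, one_smul, Matrix.mul_one]
      _ = ε • (Q * A) := by rw [← Matrix.mul_assoc, hO, Matrix.mul_smul]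
  simp [A, Q, fromBlocks_transpose, fromBlocks_multiply, fromBlocks_smul, fromBlocks_inj] at hQ
  exact ⟨hQ.2.2.2, hQ.2.2.1⟩

lemma mul_mul_eq_mul_transpose_mul_of_conj_fromBlocks {a b c d : Matrix n n K} {ε : K}
    (hε : ε ≠ 0)
    (hpres : ∀ B : Matrix n n K, ∃ C : Matrix n n K,
      fromBlocks a b c d * fromBlocks B 0 0 (-Bᵀ) * (ε • fromBlocks a b c d) =
        fromBlocks C 0 0 (-Cᵀ))
    (B : Matrix n n K) : a * B * b = b * Bᵀ * d ∧ c * B * a = d * Bᵀ * c := by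
  obtain ⟨C, hC⟩ := hpres B
  simp [fromBlocks_multiply, fromBlocks_smul, fromBlocks_inj, ← sub_eq_add_neg, ← smul_sub, hε,
    sub_eq_zero] at hC
  exact ⟨hC.2.1, hC.2.2.1⟩

lemma blocks_offDiag_eq_zero_or_diag_eq_zero [NeZero (2 : K)] {a b c d : Matrix n n K} {ε : K}
    (hε : ε ≠ 0) (hsq : fromBlocks a b c d * fromBlocks a b c d = ε • 1) (hdt : dᵀ = ε • a)
    (htw : ∀ B, a * B * b = b * Bᵀ * d ∧ c * B * a = d * Bᵀ * c) :
    (b = 0 ∧ c = 0) ∨ (a = 0 ∧ d = 0) := by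
  obtain ⟨h11, h12, h21, h22⟩ := fromBlocks_mul_self_eq_smul_one_iff.mp hsq
  have hab : a * b = 0 := eq_zero_of_eq_of_add_eq_zero K (by simpa using (htw 1).1) h12
  have hdc : d * c = 0 := eq_zero_of_eq_of_add_eq_zero K (by simpa using (htw 1).2.symm)
    (by rwa [add_comm])
  have had : a = 0 ↔ d = 0 := by
    rw [← transpose_eq_zero (M := d), hdt, smul_eq_zero, or_iff_right hε]
  have ha_or_b : a = 0 ∨ b = 0 :=
    eq_zero_or_eq_zero_of_forall_mul_mul_eq_mul_transpose_mul hε (fun B => (htw B).1) hab hdc h11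
  have hd_or_c : d = 0 ∨ c = 0 :=
    eq_zero_or_eq_zero_of_forall_mul_mul_eq_mul_transpose_mul hε
      (fun B => by simpa using ((htw Bᵀ).2).symm) hdc hab (by rwa [add_comm])
  by_cases ha : a = 0
  · exact .inr ⟨ha, had.mp ha⟩
  · exact .inl ⟨ha_or_b.resolve_left ha, hd_or_c.resolve_left (mt had.mpr ha)⟩

end Matrix

theorem involution_preserving_gl_general (ℓ : ℕ)
    (A : Matrix (Fin ℓ ⊕ Fin ℓ) (Fin ℓ ⊕ Fin ℓ) ℂ) (ε : ℂ) (hε : ε = 1 ∨ ε = -1)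
    (hA2 : A * A = ε • (1 : Matrix (Fin ℓ ⊕ Fin ℓ) (Fin ℓ ⊕ Fin ℓ) ℂ))
    (hO : Aᵀ * (fromBlocks 0 1 1 0) * A = (fromBlocks 0 1 1 0 :
      Matrix (Fin ℓ ⊕ Fin ℓ) (Fin ℓ ⊕ Fin ℓ) ℂ))
    (hpres : ∀ B : Matrix (Fin ℓ) (Fin ℓ) ℂ, ∃ C : Matrix (Fin ℓ) (Fin ℓ) ℂ,
      A * (fromBlocks B 0 0 (-Bᵀ)) * (ε • A) = fromBlocks C 0 0 (-Cᵀ)) :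
    ((∃ α β, A = fromBlocks α 0 0 β) ∨ (∃ M N, A = fromBlocks 0 M N 0)) ∧
    ((∃ M N, A = fromBlocks 0 M N 0) → ε = -1 →
      ∃ M : Matrix (Fin ℓ) (Fin ℓ) ℂ,
        IsUnit M ∧ Mᵀ = -M ∧ A = fromBlocks 0 M (-(M⁻¹)) 0 ∧ Even ℓ) := by
  obtain ⟨a, b, c, d, rfl⟩ : ∃ a b c d, A = fromBlocks a b c d :=
    ⟨_, _, _, _, (fromBlocks_toBlocks A).symm⟩
  have hε1 : ε * ε = 1 := by rcases hε with rfl | rfl <;> norm_num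
  have hε0 : ε ≠ 0 := left_ne_zero_of_mul_eq_one hε1
  obtain ⟨hbt, hdt⟩ := transpose_blocks_of_orthogonal hε1 hA2 hO
  refine ⟨?_, ?_⟩
  · rcases blocks_offDiag_eq_zero_or_diag_eq_zero hε0 hA2 hdt
      (mul_mul_eq_mul_transpose_mul_of_conj_fromBlocks hε0 hpres) with ⟨rfl, rfl⟩ | ⟨rfl, rfl⟩
    exacts [.inl ⟨a, d, rfl⟩, .inr ⟨b, c, rfl⟩]
  · rintro ⟨M, N, hMN⟩ rfl
    obtain ⟨rfl, rfl, rfl, rfl⟩ := fromBlocks_inj.mp hMN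
    have hinv : b * -c = 1 := by
      rw [Matrix.mul_neg, neg_eq_iff_eq_neg]
      simpa using (fromBlocks_mul_self_eq_smul_one_iff.mp hA2).1
    have hb : IsUnit b := IsUnit.of_mul_eq_one _ hinv
    have hskew : bᵀ = -b := by simpa using hbt
    refine ⟨b, hb, hskew, by rw [inv_eq_right_inv hinv, neg_neg], ?_⟩
    simpa using even_card_of_isUnit_of_transpose_eq_neg hb hskew

/-- Let `gl(ℓ,ℂ) ⊂ so(2ℓ,ℂ)` be the stabilizer of an isotropic decomposition
`ℂ^{2ℓ} = V ⊕ V*` (split symmetric form `Q = [[0,1],[1,0]]` in block form; `gl(ℓ,ℂ)` consists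
of the block matrices `[[B,0],[0,-Bᵀ]]`).  If `X ↦ A X A⁻¹` is an involutive automorphism of
`so(2ℓ,ℂ)` with `A` orthogonal and `A² = ε·1` (`ε = ±1`, so `A⁻¹ = ε·A`) which preserves
`gl(ℓ,ℂ)`, then `A` either preserves both `V` and `V*` (block diagonal) or interchanges them
(block antidiagonal); and if it interchanges them and `A² = −1`, then
`A = [[0,M],[−M⁻¹,0]]` with `Mᵀ = −M` (so `ℓ` must be even). -/
theorem involution_preserving_gl (ℓ : ℕ) (hℓ : 1 ≤ ℓ)
    (A : Matrix (Fin ℓ ⊕ Fin ℓ) (Fin ℓ ⊕ Fin ℓ) ℂ) (ε : ℂ) (hε : ε = 1 ∨ ε = -1)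
    (hA2 : A * A = ε • (1 : Matrix (Fin ℓ ⊕ Fin ℓ) (Fin ℓ ⊕ Fin ℓ) ℂ))
    (hO : Aᵀ * (fromBlocks 0 1 1 0) * A = (fromBlocks 0 1 1 0 :
      Matrix (Fin ℓ ⊕ Fin ℓ) (Fin ℓ ⊕ Fin ℓ) ℂ))
    (hpres : ∀ B : Matrix (Fin ℓ) (Fin ℓ) ℂ, ∃ C : Matrix (Fin ℓ) (Fin ℓ) ℂ,
      A * (fromBlocks B 0 0 (-Bᵀ)) * (ε • A) = fromBlocks C 0 0 (-Cᵀ)) :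
    ((∃ α β, A = fromBlocks α 0 0 β) ∨ (∃ M N, A = fromBlocks 0 M N 0)) ∧
    ((∃ M N, A = fromBlocks 0 M N 0) → ε = -1 →
      ∃ M : Matrix (Fin ℓ) (Fin ℓ) ℂ,
        IsUnit M ∧ Mᵀ = -M ∧ A = fromBlocks 0 M (-(M⁻¹)) 0 ∧ Even ℓ) :=
  involution_preserving_gl_general ℓ A ε hε hA2 hO hpres
end

section
/- As a representation of gl(V) with V = ℂ^ℓ, ℓ ≥ 3, the space of algebraic Weyl tensors on ℂ^{2ℓ} = V ⊕ V* (with the canonical split quadratic form) decomposes with exactly one trivial one-dimensional summand; in particular the subspace of gl(ℓ,ℂ)-invariant Weyl tensors on ℂ^{2ℓ} is one-dimensional. -/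
/-!
A `gl(V)`-invariant tensor on `V ⊕ V*` is annihilated by the identity of `gl(V)`, which acts by
`+1` on `V` and `-1` on `V*`; so its nonzero components have as many `V` as `V*` slots, and with
the Riemann symmetries it is determined by its `V V V* V*` and `V V* V V*` components. Each of
these is a `gl(V)`-invariant of `V ⊗ V ⊗ V* ⊗ V*`, hence a combination of the two contractions
`δ_ik δ_jl` and `δ_il δ_jk`. Skew-symmetry, the Bianchi identity and tracelessness cut the four
coefficients down to one. Conversely, a suitable combination of `g ∧ g` (for the split form `g`)
and of the Kähler-type curvature tensor of the split symplectic form `ω` is a nonzero invariant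
Weyl tensor.
-/

open Matrix

/-- The split symmetric bilinear form on `ℂ^{2ℓ} = V ⊕ V*` (dual pairing of the two isotropic
summands). -/
noncomputable def splitForm (ℓ : ℕ) : Matrix (Fin ℓ ⊕ Fin ℓ) (Fin ℓ ⊕ Fin ℓ) ℂ :=
  fromBlocks 0 1 1 0

/-- The element of `gl(ℓ,ℂ) ⊂ so(2ℓ,ℂ)` (the stabilizer of the isotropic decomposition
`ℂ^{2ℓ} = V ⊕ V*`) determined by `B ∈ gl(V)`. -/
def glEmb (ℓ : ℕ) (B : Matrix (Fin ℓ) (Fin ℓ) ℂ) :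
    Matrix (Fin ℓ ⊕ Fin ℓ) (Fin ℓ ⊕ Fin ℓ) ℂ :=
  fromBlocks B 0 0 (-Bᵀ)

/-- An algebraic Weyl tensor on `ℂ^{2ℓ}` with the canonical split quadratic form: a
`(4,0)`-tensor with the Riemann symmetries (skew in the first and last pairs, pair-exchange
symmetric, first Bianchi identity) lying in the kernel of the Ricci contraction. -/
def IsWeylTensor (ℓ : ℕ) (φ : (Fin ℓ ⊕ Fin ℓ) → (Fin ℓ ⊕ Fin ℓ) → (Fin ℓ ⊕ Fin ℓ) →
    (Fin ℓ ⊕ Fin ℓ) → ℂ) : Prop :=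
  (∀ a b c d, φ a b c d = -φ b a c d) ∧
  (∀ a b c d, φ a b c d = -φ a b d c) ∧
  (∀ a b c d, φ a b c d = φ c d a b) ∧
  (∀ a b c d, φ a b c d + φ a c d b + φ a d b c = 0) ∧
  (∀ b d, ∑ x, ∑ y, splitForm ℓ x y * φ x b y d = 0)

/-- `φ` is invariant under the natural action of `gl(ℓ,ℂ) ⊂ so(2ℓ,ℂ)` on `(4,0)`-tensors. -/
def IsGlInvariant (ℓ : ℕ) (φ : (Fin ℓ ⊕ Fin ℓ) → (Fin ℓ ⊕ Fin ℓ) → (Fin ℓ ⊕ Fin ℓ) →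
    (Fin ℓ ⊕ Fin ℓ) → ℂ) : Prop :=
  ∀ B : Matrix (Fin ℓ) (Fin ℓ) ℂ, ∀ a b c d,
    ∑ e, (glEmb ℓ B e a * φ e b c d + glEmb ℓ B e b * φ a e c d +
          glEmb ℓ B e c * φ a b e d + glEmb ℓ B e d * φ a b c e) = 0

section MixedInvariant

variable {ι : Type*} [DecidableEq ι] {T : ι → ι → ι → ι → ℂ}

/-- `T` is read as a multilinear form on `V × V × V* × V*`, and the condition is its infinitesimal
invariance under every elementary matrix `E_pq` of `gl(V)`. -/
def IsMixedInvariant (T : ι → ι → ι → ι → ℂ) : Prop :=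
  ∀ p q i j k l, (if i = q then T p j k l else 0) + (if j = q then T i p k l else 0) =
    (if k = p then T i j q l else 0) + (if l = p then T i j k q else 0)

namespace IsMixedInvariant

lemma weight_mul_eq_zero (hT : IsMixedInvariant T) (p i j k l : ι) :
    ((if i = p then 1 else 0) + (if j = p then 1 else 0) - (if k = p then 1 else 0) -
      (if l = p then 1 else 0) : ℂ) * T i j k l = 0 := by
  have h := hT p p i j k l
  split_ifs at h ⊢ <;> subst_vars <;> linear_combination h

lemma apply_eq_zero (hT : IsMixedInvariant T) {i j k l : ι}
    (h : ¬((i = k ∧ j = l) ∨ (i = l ∧ j = k))) : T i j k l = 0 := by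
  by_contra hne
  have w : ∀ p, ((if i = p then 1 else 0) + (if j = p then 1 else 0) - (if k = p then 1 else 0) -
      (if l = p then 1 else 0) : ℂ) = 0 :=
    fun p => (mul_eq_zero.mp (hT.weight_mul_eq_zero p i j k l)).resolve_right hne
  have hi : k = i ∨ l = i := by
    by_contra! hc
    have := w i
    rw [if_pos rfl, if_neg hc.1, if_neg hc.2] at this
    split_ifs at this <;> norm_num at this
  rcases hi with rfl | rfl
  · refine h (Or.inl ⟨rfl, ?_⟩)
    by_contra hlj
    have := w j
    simp [Ne.symm hlj] at this
  · refine h (Or.inr ⟨rfl, ?_⟩)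
    by_contra hkj
    have := w j
    simp [Ne.symm hkj] at this

lemma apply_left_eq (hT : IsMixedInvariant T) {p q j : ι} (hpj : p ≠ j) (hqj : q ≠ j) :
    T p j p j = T q j q j := by
  simpa [Ne.symm hqj, Ne.symm hpj] using hT p q q j p j

lemma apply_right_eq (hT : IsMixedInvariant T) {i p q : ι} (hip : i ≠ p) (hiq : i ≠ q) :
    T i p i p = T i q i q := by
  simpa [hip, hiq] using hT p q i q i p

lemma apply_swap_left_eq (hT : IsMixedInvariant T) {p q j : ι} (hpj : p ≠ j) (hqj : q ≠ j) :
    T p j j p = T q j j q := by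
  simpa [Ne.symm hqj, Ne.symm hpj] using hT p q q j j p

lemma apply_swap_right_eq (hT : IsMixedInvariant T) {i p q : ι} (hip : i ≠ p) (hiq : i ≠ q) :
    T i p p i = T i q q i := by
  simpa [hip, hiq] using hT p q i q p i

lemma apply_diag (hT : IsMixedInvariant T) {p q : ι} (hpq : p ≠ q) :
    T p p p p = T q p q p + T q p p q := by
  simpa [hpq] using hT p q q p p p

end IsMixedInvariant

lemma apply_eq_apply_of_ne_of_ne {α : Type*} {f : ι → ι → α}
    (hthird : ∀ i j : ι, ∃ k, k ≠ i ∧ k ≠ j)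
    (hleft : ∀ {p q j}, p ≠ j → q ≠ j → f p j = f q j)
    (hright : ∀ {i p q}, i ≠ p → i ≠ q → f i p = f i q)
    {i j i' j' : ι} (hij : i ≠ j) (hij' : i' ≠ j') : f i j = f i' j' := by
  have key : ∀ {i j}, i ≠ j → j ≠ i' → f i j = f i' j' := fun hij hji' =>
    (hleft hij hji'.symm).trans (hright hji'.symm hij')
  by_cases hji' : j = i'
  · obtain ⟨k, hki, hkj⟩ := hthird i j
    exact (hright hij hki.symm).trans (key hki.symm (hji' ▸ hkj))
  · exact key hij hji'

/-- The first fundamental theorem of invariant theory for `V ⊗ V ⊗ V* ⊗ V*`: the invariants are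
spanned by the two contractions `δ_ik δ_jl` and `δ_il δ_jk`. -/
theorem IsMixedInvariant.exists_eq (hT : IsMixedInvariant T)
    (hthird : ∀ i j : ι, ∃ k, k ≠ i ∧ k ≠ j) :
    ∃ α β : ℂ, ∀ i j k l,
      T i j k l = (if i = k ∧ j = l then α else 0) + (if i = l ∧ j = k then β else 0) := by
  rcases isEmpty_or_nonempty ι with hι | ⟨⟨i₀⟩⟩
  · exact ⟨0, 0, fun i => isEmptyElim i⟩
  obtain ⟨j₀, hj₀, -⟩ := hthird i₀ i₀
  have hα : ∀ {i j}, i ≠ j → T i j i j = T j₀ i₀ j₀ i₀ := fun hij =>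
    apply_eq_apply_of_ne_of_ne (f := fun i j => T i j i j) hthird hT.apply_left_eq
      hT.apply_right_eq hij hj₀
  have hβ : ∀ {i j}, i ≠ j → T i j j i = T j₀ i₀ i₀ j₀ := fun hij =>
    apply_eq_apply_of_ne_of_ne (f := fun i j => T i j j i) hthird hT.apply_swap_left_eq
      hT.apply_swap_right_eq hij hj₀
  refine ⟨T j₀ i₀ j₀ i₀, T j₀ i₀ i₀ j₀, fun i j k l => ?_⟩
  by_cases hα' : i = k ∧ j = l
  · obtain ⟨rfl, rfl⟩ := hα'
    by_cases hij : i = j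
    · subst hij
      obtain ⟨q, hqi, -⟩ := hthird i i
      simp [hT.apply_diag (Ne.symm hqi), hα hqi, hβ hqi]
    · simp [hij, hα hij]
  by_cases hβ' : i = l ∧ j = k
  · obtain ⟨rfl, rfl⟩ := hβ'
    have hij : i ≠ j := fun h => hα' ⟨h, h.symm⟩
    simp [hij, hβ hij]
  · simp [hα', hβ', hT.apply_eq_zero (not_or.mpr ⟨hα', hβ'⟩)]

end MixedInvariant

lemma Matrix.sum_mul_add_mul_eq_zero {ι : Type*} [Fintype ι] {X M : Matrix ι ι ℂ}
    (h : Xᵀ * M + M * X = 0) (a b : ι) : ∑ e, (X e a * M e b + X e b * M a e) = 0 := by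
  simpa [Matrix.mul_apply, Finset.sum_add_distrib, mul_comm] using congrFun (congrFun h a) b

section
variable {ℓ : ℕ}

lemma sum_glEmb_mul (B : Matrix (Fin ℓ) (Fin ℓ) ℂ) (f : Fin ℓ ⊕ Fin ℓ → ℂ) (a : Fin ℓ ⊕ Fin ℓ) :
    ∑ e, glEmb ℓ B e a * f e =
      Sum.elim (fun i => ∑ k, B k i * f (.inl k)) (fun i => -∑ k, B i k * f (.inr k)) a := by
  rcases a with i | i <;> simp [glEmb, Fintype.sum_sum_type]

lemma sum_glEmb_single_mul (p q : Fin ℓ) (f : Fin ℓ ⊕ Fin ℓ → ℂ) (a : Fin ℓ ⊕ Fin ℓ) :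
    ∑ e, glEmb ℓ (Matrix.single p q 1) e a * f e =
      Sum.elim (fun i => if i = q then f (.inl p) else 0)
        (fun i => -if i = p then f (.inr q) else 0) a := by
  rw [sum_glEmb_mul]
  rcases a with i | i <;> simp [Matrix.single_apply, ite_and, eq_comm]

def isotropicGrading : Fin ℓ ⊕ Fin ℓ → ℂ := Sum.elim (fun _ => 1) (fun _ => -1)

lemma sum_glEmb_one_mul (f : Fin ℓ ⊕ Fin ℓ → ℂ) (a : Fin ℓ ⊕ Fin ℓ) :
    ∑ e, glEmb ℓ 1 e a * f e = isotropicGrading a * f a := by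
  rw [sum_glEmb_mul]
  rcases a with i | i <;> simp [isotropicGrading, one_apply]

lemma sum_splitForm_mul (ψ : Fin ℓ ⊕ Fin ℓ → Fin ℓ ⊕ Fin ℓ → ℂ) :
    ∑ x, ∑ y, splitForm ℓ x y * ψ x y = ∑ k, (ψ (.inl k) (.inr k) + ψ (.inr k) (.inl k)) := by
  simp [splitForm, Fintype.sum_sum_type, Finset.sum_add_distrib, add_comm, one_apply]

variable (ℓ) in
noncomputable def splitSymplecticForm : Matrix (Fin ℓ ⊕ Fin ℓ) (Fin ℓ ⊕ Fin ℓ) ℂ :=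
  fromBlocks 0 1 (-1) 0

lemma splitForm_comm (a b : Fin ℓ ⊕ Fin ℓ) : splitForm ℓ a b = splitForm ℓ b a := by
  rcases a with i | i <;> rcases b with j | j <;> simp [splitForm, one_apply, eq_comm]

lemma splitSymplecticForm_antisymm (a b : Fin ℓ ⊕ Fin ℓ) :
    splitSymplecticForm ℓ a b = -splitSymplecticForm ℓ b a := by
  rcases a with i | i <;> rcases b with j | j <;>
    simp [splitSymplecticForm, one_apply, eq_comm]

lemma glEmb_transpose_mul_splitForm_add (B : Matrix (Fin ℓ) (Fin ℓ) ℂ) :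
    (glEmb ℓ B)ᵀ * splitForm ℓ + splitForm ℓ * glEmb ℓ B = 0 := by
  simp [glEmb, splitForm, fromBlocks_transpose, fromBlocks_multiply, fromBlocks_add,
    ← fromBlocks_zero]

lemma glEmb_transpose_mul_splitSymplecticForm_add (B : Matrix (Fin ℓ) (Fin ℓ) ℂ) :
    (glEmb ℓ B)ᵀ * splitSymplecticForm ℓ + splitSymplecticForm ℓ * glEmb ℓ B = 0 := by
  simp [glEmb, splitSymplecticForm, fromBlocks_transpose, fromBlocks_multiply, fromBlocks_add,
    ← fromBlocks_zero]

variable (ℓ) in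
/-- The ratio `3 : 2ℓ - 1` of the two terms is the one that makes the Ricci contraction vanish. -/
noncomputable def glInvariantWeyl (a b c d : Fin ℓ ⊕ Fin ℓ) : ℂ :=
  let g := splitForm ℓ
  let ω := splitSymplecticForm ℓ
  3 * (g a c * g b d - g a d * g b c) +
    (2 * ℓ - 1) * (2 * ω a b * ω c d + ω a c * ω b d - ω a d * ω b c)

lemma sum_splitForm_mul_glInvariantWeyl (b d : Fin ℓ ⊕ Fin ℓ) :
    ∑ x, ∑ y, splitForm ℓ x y * glInvariantWeyl ℓ x b y d = 0 := by
  rw [sum_splitForm_mul]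
  rcases b with i | i <;> rcases d with j | j <;> rcases eq_or_ne i j with rfl | hij <;>
    simp [*, Ne.symm, glInvariantWeyl, splitForm, splitSymplecticForm, one_apply,
      Finset.sum_add_distrib, Finset.sum_sub_distrib, ← Finset.mul_sum] <;> ring

lemma isWeylTensor_glInvariantWeyl : IsWeylTensor ℓ (glInvariantWeyl ℓ) := by
  have g := splitForm_comm (ℓ := ℓ)
  have ω := splitSymplecticForm_antisymm (ℓ := ℓ)
  refine ⟨fun a b c d => ?_, fun a b c d => ?_, fun a b c d => ?_, fun a b c d => ?_,
    sum_splitForm_mul_glInvariantWeyl⟩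
  · simp only [glInvariantWeyl]; rw [g b c, g b d, ω b a, ω b c, ω b d]; ring
  · simp only [glInvariantWeyl]; rw [ω d c]; ring
  · simp only [glInvariantWeyl]
    rw [g c a, g d b, g c b, g d a, ω c a, ω d b, ω c b, ω d a]; ring
  · simp only [glInvariantWeyl]; rw [g c b, g d c, g d b, ω d b, ω c b, ω d c]; ring

lemma isGlInvariant_glInvariantWeyl : IsGlInvariant ℓ (glInvariantWeyl ℓ) := by
  intro B a b c d
  set X := glEmb ℓ B
  set g := splitForm ℓ
  set ω := splitSymplecticForm ℓ
  let D (M : Matrix (Fin ℓ ⊕ Fin ℓ) (Fin ℓ ⊕ Fin ℓ) ℂ) (x y) := ∑ e, (X e x * M e y + X e y * M x e)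
  have hg : ∀ x y, D g x y = 0 :=
    Matrix.sum_mul_add_mul_eq_zero (glEmb_transpose_mul_splitForm_add B)
  have hω : ∀ x y, D ω x y = 0 :=
    Matrix.sum_mul_add_mul_eq_zero (glEmb_transpose_mul_splitSymplecticForm_add B)
  calc ∑ e, (X e a * glInvariantWeyl ℓ e b c d + X e b * glInvariantWeyl ℓ a e c d +
          X e c * glInvariantWeyl ℓ a b e d + X e d * glInvariantWeyl ℓ a b c e)
      = 3 * (D g a c * g b d + g a c * D g b d - D g a d * g b c - g a d * D g b c) +
        (2 * ℓ - 1) * (2 * (D ω a b * ω c d + ω a b * D ω c d) + D ω a c * ω b d +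
          ω a c * D ω b d - D ω a d * ω b c - ω a d * D ω b c) := by
        simp only [D, Finset.sum_mul, Finset.mul_sum, ← Finset.sum_add_distrib,
          ← Finset.sum_sub_distrib]
        refine Finset.sum_congr rfl fun e _ => ?_
        simp only [glInvariantWeyl]; ring
    _ = 0 := by simp only [hg, hω]; ring

lemma glInvariantWeyl_inl_inl_inr_inr (i j k l : Fin ℓ) :
    glInvariantWeyl ℓ (.inl i) (.inl j) (.inr k) (.inr l) =
      (if i = k ∧ j = l then (2 * ℓ + 2 : ℂ) else 0) +
        (if i = l ∧ j = k then -(2 * ℓ + 2 : ℂ) else 0) := by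
  simp [glInvariantWeyl, splitForm, splitSymplecticForm, one_apply]
  split_ifs <;> simp_all <;> ring

lemma glInvariantWeyl_inl_inr_inl_inr (i j k l : Fin ℓ) :
    glInvariantWeyl ℓ (.inl i) (.inr j) (.inl k) (.inr l) =
      (if i = j ∧ k = l then (4 * ℓ - 2 : ℂ) else 0) +
        (if i = l ∧ k = j then (2 * ℓ - 4 : ℂ) else 0) := by
  simp [glInvariantWeyl, splitForm, splitSymplecticForm, one_apply]
  split_ifs <;> simp_all <;> ring

lemma glInvariantWeyl_ne_zero (hℓ : 1 < ℓ) : glInvariantWeyl ℓ ≠ 0 := by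
  intro h
  have := congrFun (congrFun (congrFun (congrFun h (.inl ⟨0, by omega⟩)) (.inl ⟨1, by omega⟩))
    (.inr ⟨0, by omega⟩)) (.inr ⟨1, by omega⟩)
  rw [glInvariantWeyl_inl_inl_inr_inr] at this
  norm_num at this
  exact_mod_cast this

variable {φ : Fin ℓ ⊕ Fin ℓ → Fin ℓ ⊕ Fin ℓ → Fin ℓ ⊕ Fin ℓ → Fin ℓ ⊕ Fin ℓ → ℂ}

lemma IsGlInvariant.apply_eq_zero (h : IsGlInvariant ℓ φ) {a b c d : Fin ℓ ⊕ Fin ℓ}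
    (hs : isotropicGrading a + isotropicGrading b + isotropicGrading c + isotropicGrading d ≠ 0) :
    φ a b c d = 0 := by
  have := h 1 a b c d
  simp only [Finset.sum_add_distrib, sum_glEmb_one_mul, ← add_mul] at this
  exact (mul_eq_zero.mp this).resolve_left hs

lemma IsGlInvariant.isMixedInvariant_inl_inl_inr_inr (h : IsGlInvariant ℓ φ) :
    IsMixedInvariant fun i j k l => φ (.inl i) (.inl j) (.inr k) (.inr l) := by
  intro p q i j k l
  have := h (Matrix.single p q 1) (.inl i) (.inl j) (.inr k) (.inr l)
  simp only [Finset.sum_add_distrib, sum_glEmb_single_mul, Sum.elim_inl, Sum.elim_inr] at this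
  linear_combination this

lemma IsGlInvariant.isMixedInvariant_inl_inr_inl_inr (h : IsGlInvariant ℓ φ) :
    IsMixedInvariant fun i k j l => φ (.inl i) (.inr j) (.inl k) (.inr l) := by
  intro p q i k j l
  have := h (Matrix.single p q 1) (.inl i) (.inr j) (.inl k) (.inr l)
  simp only [Finset.sum_add_distrib, sum_glEmb_single_mul, Sum.elim_inl, Sum.elim_inr] at this
  linear_combination this

lemma IsWeylTensor.smul (t : ℂ) (h : IsWeylTensor ℓ φ) : IsWeylTensor ℓ (t • φ) := by
  obtain ⟨h₁, h₂, h₃, h₄, h₅⟩ := h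
  refine ⟨fun a b c d => ?_, fun a b c d => ?_, fun a b c d => ?_, fun a b c d => ?_,
    fun b d => ?_⟩
  all_goals simp only [Pi.smul_apply, smul_eq_mul]
  · rw [h₁ a b c d, mul_neg]
  · rw [h₂ a b c d, mul_neg]
  · rw [h₃ a b c d]
  · linear_combination t * h₄ a b c d
  · simp only [mul_left_comm _ t, ← Finset.mul_sum, h₅ b d, mul_zero]

lemma IsGlInvariant.smul (t : ℂ) (h : IsGlInvariant ℓ φ) : IsGlInvariant ℓ (t • φ) := by
  intro B a b c d
  simp only [Pi.smul_apply, smul_eq_mul, mul_left_comm _ t, ← mul_add, ← Finset.mul_sum,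
    h B a b c d, mul_zero]

theorem IsWeylTensor.ext_of_isGlInvariant
    {ψ : Fin ℓ ⊕ Fin ℓ → Fin ℓ ⊕ Fin ℓ → Fin ℓ ⊕ Fin ℓ → Fin ℓ ⊕ Fin ℓ → ℂ}
    (hφ : IsWeylTensor ℓ φ) (hψ : IsWeylTensor ℓ ψ)
    (hφ' : IsGlInvariant ℓ φ) (hψ' : IsGlInvariant ℓ ψ)
    (hQ : ∀ i j k l,
      φ (.inl i) (.inl j) (.inr k) (.inr l) = ψ (.inl i) (.inl j) (.inr k) (.inr l))
    (hR : ∀ i j k l,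
      φ (.inl i) (.inr j) (.inl k) (.inr l) = ψ (.inl i) (.inr j) (.inl k) (.inr l)) :
    φ = ψ := by
  obtain ⟨φ₁₂, φ₃₄, φpair, -, -⟩ := hφ
  obtain ⟨ψ₁₂, ψ₃₄, ψpair, -, -⟩ := hψ
  funext a b c d
  rcases a with i | i <;> rcases b with j | j <;> rcases c with k | k <;> rcases d with l | l
  case inl.inl.inr.inr => exact hQ i j k l
  case inl.inr.inl.inr => exact hR i j k l
  case inl.inr.inr.inl => rw [φ₃₄, ψ₃₄, hR]
  case inr.inl.inl.inr => rw [φ₁₂, ψ₁₂, hR]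
  case inr.inl.inr.inl => rw [φ₁₂, φ₃₄, ψ₁₂, ψ₃₄, hR]
  case inr.inr.inl.inl => rw [φpair, ψpair, hQ]
  all_goals
    refine (hφ'.apply_eq_zero ?_).trans (hψ'.apply_eq_zero ?_).symm <;> norm_num [isotropicGrading]

theorem IsWeylTensor.exists_components (hℓ : 2 < ℓ) (hφ : IsWeylTensor ℓ φ)
    (hφ' : IsGlInvariant ℓ φ) :
    ∃ α β : ℂ, (ℓ - 2 : ℂ) * α = (2 * ℓ - 1) * β ∧
      (∀ i j k l, φ (.inl i) (.inl j) (.inr k) (.inr l) =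
        (if i = k ∧ j = l then α - β else 0) + (if i = l ∧ j = k then β - α else 0)) ∧
      (∀ i j k l, φ (.inl i) (.inr j) (.inl k) (.inr l) =
        (if i = j ∧ k = l then α else 0) + (if i = l ∧ k = j then β else 0)) := by
  have hthird (i j : Fin ℓ) := Fin.exists_ne_and_ne_of_two_lt i j hℓ
  obtain ⟨αQ, βQ, hQ⟩ := hφ'.isMixedInvariant_inl_inl_inr_inr.exists_eq hthird
  obtain ⟨α, β, hR⟩ := hφ'.isMixedInvariant_inl_inr_inl_inr.exists_eq hthird
  obtain ⟨skew₁₂, skew₃₄, -, bianchi, traceless⟩ := hφ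
  set i₀ : Fin ℓ := ⟨0, by omega⟩
  set j₀ : Fin ℓ := ⟨1, by omega⟩
  have hij₀ : i₀ ≠ j₀ := by simp [i₀, j₀, Fin.ext_iff]
  have hskew : βQ = -αQ := by
    have := skew₁₂ (.inl i₀) (.inl j₀) (.inr i₀) (.inr j₀)
    simp [hQ, hij₀, hij₀.symm] at this
    linear_combination this
  have hbianchi : αQ = α - β := by
    have := bianchi (.inl i₀) (.inr i₀) (.inl j₀) (.inr j₀)
    rw [skew₃₄ (.inl i₀) (.inr j₀) (.inr i₀)] at this
    simp [hQ, hR, hij₀, hij₀.symm, hskew] at this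
    linear_combination -this
  have htrace : (ℓ - 2 : ℂ) * α = (2 * ℓ - 1) * β := by
    have := traceless (.inl i₀) (.inr i₀)
    simp only [sum_splitForm_mul] at this
    simp [skew₁₂ (.inr _), hQ, hR, Finset.sum_add_distrib, hskew, eq_comm (a := i₀)] at this
    linear_combination this - (ℓ - 1 : ℂ) * hbianchi
  refine ⟨α, β, htrace, fun i j k l => ?_, fun i j k l => hR i k j l⟩
  rw [hQ, hskew, hbianchi, neg_sub]

theorem IsWeylTensor.exists_eq_smul_glInvariantWeyl (hℓ : 2 < ℓ) (hφ : IsWeylTensor ℓ φ)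
    (hφ' : IsGlInvariant ℓ φ) : ∃ t : ℂ, φ = t • glInvariantWeyl ℓ := by
  obtain ⟨α, β, htrace, hQ, hR⟩ := hφ.exists_components hℓ hφ'
  have h₁ : (2 * ℓ - 1 : ℂ) ≠ 0 := by exact_mod_cast (by omega : (2 * ℓ - 1 : ℤ) ≠ 0)
  have h₂ : (4 * ℓ - 2 : ℂ) ≠ 0 := by exact_mod_cast (by omega : (4 * ℓ - 2 : ℤ) ≠ 0)
  set t := α / (4 * ℓ - 2)
  have hα : α = t * (4 * ℓ - 2) := (div_mul_cancel₀ α h₂).symm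
  have hβ : β = t * (2 * ℓ - 4) :=
    mul_left_cancel₀ h₁ (by linear_combination -htrace + (ℓ - 2 : ℂ) * hα)
  refine ⟨t, hφ.ext_of_isGlInvariant (isWeylTensor_glInvariantWeyl.smul t) hφ'
    (isGlInvariant_glInvariantWeyl.smul t) (fun i j k l => ?_) (fun i j k l => ?_)⟩
  · rw [hQ, Pi.smul_apply, Pi.smul_apply, Pi.smul_apply, Pi.smul_apply, smul_eq_mul,
      glInvariantWeyl_inl_inl_inr_inr, hα, hβ]
    split_ifs <;> ring
  · rw [hR, Pi.smul_apply, Pi.smul_apply, Pi.smul_apply, Pi.smul_apply, smul_eq_mul,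
      glInvariantWeyl_inl_inr_inl_inr, hα, hβ]
    split_ifs <;> ring

end

/-- For `ℓ ≥ 3`, as a representation of `gl(V)` with `V = ℂ^ℓ`, the space of algebraic Weyl
tensors on `ℂ^{2ℓ} = V ⊕ V*` contains exactly one trivial one-dimensional summand: the
subspace of `gl(ℓ,ℂ)`-invariant Weyl tensors is one-dimensional. -/
theorem gl_invariant_weyl_one_dimensional (ℓ : ℕ) (hℓ : 3 ≤ ℓ) :
    ∃ φ₀ : (Fin ℓ ⊕ Fin ℓ) → (Fin ℓ ⊕ Fin ℓ) → (Fin ℓ ⊕ Fin ℓ) → (Fin ℓ ⊕ Fin ℓ) → ℂ,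
      IsWeylTensor ℓ φ₀ ∧ IsGlInvariant ℓ φ₀ ∧ φ₀ ≠ 0 ∧
      ∀ φ, IsWeylTensor ℓ φ → IsGlInvariant ℓ φ → ∃ c : ℂ, φ = c • φ₀ :=
  ⟨glInvariantWeyl ℓ, isWeylTensor_glInvariantWeyl, isGlInvariant_glInvariantWeyl,
    glInvariantWeyl_ne_zero (by omega), fun _ hφ hφ' => hφ.exists_eq_smul_glInvariantWeyl hℓ hφ'⟩
end
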